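/- Let Π be a ground logic program over atoms A with rules indexed by a finite type R, and let T(Π) be its transformed program over A ⊎ R. If M ⊆ A is a model of Π, then M' = M ∪ { dm_r : r ∈ R, the body of rule r is false in M } is a model of T(Π). -/

import Mathlib

/-- A ground rule: head ← body⁺, not body⁻. -/
structure Rule (A : Type*) where
  head : A
  bodyPos : Finset A
  bodyNeg : Finset A
deriving DecidableEq

/-- The body of rule `r` is true in interpretation `M`:
`body⁺(r) ⊆ M` and `body⁻(r) ∩ M = ∅`. -/
def BodyTrue {A : Type*} (M : Set A) (r : Rule A) : Prop :=
  ↑r.bodyPos ⊆ M ∧ ∀ a ∈ r.bodyNeg, a ∉ M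

/-- `M` is a model of the program `P` (a family of rules indexed by `R`). -/
def IsModel {A R : Type*} (P : R → Rule A) (M : Set A) : Prop :=
  ∀ r, BodyTrue M (P r) → (P r).head ∈ M

/-- `M` is a supported model of `P`: a model in which every true atom
is the head of some rule of `P` whose body is true in `M`. -/
def IsSupported {A R : Type*} (P : R → Rule A) (M : Set A) : Prop :=
  IsModel P M ∧ ∀ a ∈ M, ∃ r, (P r).head = a ∧ ↑(P r).bodyPos ⊆ M ∧
    ∀ b ∈ (P r).bodyNeg, b ∉ M

/-- `N` is a model of the Gelfond–Lifschitz reduct `P^M`: for every rule of `P`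
surviving the reduct (i.e. with `body⁻(r) ∩ M = ∅`), whose negative literals are
removed, if its positive body holds in `N` then so does its head. -/
def ReductModel {A R : Type*} (P : R → Rule A) (M N : Set A) : Prop :=
  ∀ r, (∀ a ∈ (P r).bodyNeg, a ∉ M) → ↑(P r).bodyPos ⊆ N → (P r).head ∈ N

/-- `M` is a stable model of `P`: `M` is the least model of the reduct `P^M`. -/
def IsStable {A R : Type*} (P : R → Rule A) (M : Set A) : Prop :=
  ReductModel P M M ∧ ∀ N, ReductModel P M N → M ⊆ N

/-- Index type for the rules of the transformed program `T(P)`: one rule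
`head(r) ← not dm_r` per rule `r`, one rule `dm_r ← not l` per `l ∈ body⁺(r)`,
and one rule `dm_r ← l` per `l ∈ body⁻(r)`. -/
abbrev TransIdx {A R : Type*} (P : R → Rule A) : Type _ :=
  R ⊕ ((Σ r : R, {l // l ∈ (P r).bodyPos}) ⊕ (Σ r : R, {l // l ∈ (P r).bodyNeg}))

/-- The transformed program `T(P)` over atoms `A ⊕ R`, where `Sum.inr r`
plays the role of the fresh auxiliary atom `dm_r`. -/
def Transform {A R : Type*} (P : R → Rule A) : TransIdx P → Rule (A ⊕ R)
  | Sum.inl r => ⟨Sum.inl (P r).head, ∅, {Sum.inr r}⟩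
  | Sum.inr (Sum.inl ⟨r, l⟩) => ⟨Sum.inr r, ∅, {Sum.inl l.1}⟩
  | Sum.inr (Sum.inr ⟨r, l⟩) => ⟨Sum.inr r, {Sum.inl l.1}, ∅⟩

/-- `Lift P M = M ∪ { dm_r | the body of rule r is false in M }`,
viewing `M ⊆ A` as a subset of `A ⊕ R` via the left injection. -/
def Lift {A R : Type*} (P : R → Rule A) (M : Set A) : Set (A ⊕ R) :=
  Sum.inl '' M ∪ Sum.inr '' {r | ¬ BodyTrue M (P r)}

section Rules

variable {A : Type*} {M : Set A}

theorem bodyTrue_mk_empty_singleton_iff (h b : A) :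
    BodyTrue M ⟨h, ∅, {b}⟩ ↔ b ∉ M := by
  simp [BodyTrue]

theorem bodyTrue_mk_singleton_empty_iff (h b : A) :
    BodyTrue M ⟨h, {b}, ∅⟩ ↔ b ∈ M := by
  simp [BodyTrue]

theorem not_bodyTrue_of_mem_bodyPos {r : Rule A} {l : A} (hl : l ∈ r.bodyPos) (hlM : l ∉ M) :
    ¬ BodyTrue M r :=
  fun hr => hlM (hr.1 hl)

theorem not_bodyTrue_of_mem_bodyNeg {r : Rule A} {l : A} (hl : l ∈ r.bodyNeg) (hlM : l ∈ M) :
    ¬ BodyTrue M r :=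
  fun hr => hr.2 l hl hlM

end Rules

section Lift

variable {A R : Type*} (P : R → Rule A) (M : Set A)

theorem inl_mem_lift_iff (a : A) : Sum.inl a ∈ Lift P M ↔ a ∈ M := by
  simp [Lift]

theorem inr_mem_lift_iff (r : R) : Sum.inr r ∈ Lift P M ↔ ¬ BodyTrue M (P r) := by
  simp [Lift]

end Lift

theorem model_gives_model_of_transform_general
    {A R : Type*} (P : R → Rule A) (M : Set A)
    (h : IsModel P M) : IsModel (Transform P) (Lift P M) := by
  rintro (r | ⟨r, l, hl⟩ | ⟨r, l, hl⟩) hb <;>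
    simp only [Transform, bodyTrue_mk_empty_singleton_iff, bodyTrue_mk_singleton_empty_iff,
      inl_mem_lift_iff, inr_mem_lift_iff, not_not] at hb ⊢
  · exact h r hb
  · exact not_bodyTrue_of_mem_bodyPos hl hb
  · exact not_bodyTrue_of_mem_bodyNeg hl hb

/-- If `M` is a model of `P`, then
`M' = M ∪ { dm_r | body of r is false in M }` is a model of `T(P)`. -/
theorem model_gives_model_of_transform
    {A R : Type*} [Fintype R] (P : R → Rule A) (M : Set A)
    (h : IsModel P M) : IsModel (Transform P) (Lift P M) :=
  model_gives_model_of_transform_general P M h
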